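/- Let M and M' be d×d real matrices such that Mᵀ has d distinct real eigenvalues with eigenvectors f_1, …, f_d and M'ᵀ has d distinct real eigenvalues with eigenvectors f'_1, …, f'_d, and suppose that no f'_j lies in the span of any proper subset of {f_1, …, f_d}. Then every d×d matrix A satisfying MA = AM, M'A = AM', and Σ_{x,x'} A(x,x') = 0 is the zero matrix. -/

import Mathlib

/-!
Since `Mᵀ` has `d` eigenvectors `f_j` with distinct eigenvalues, they form a basis and each
eigenspace of `Mᵀ` is a line. `Aᵀ` commutes with `Mᵀ`, so it preserves these lines and is
diagonal in the basis `f`, say `Aᵀ f_j = a_j f_j`; likewise `f'_1` is an eigenvector of `Aᵀ`,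
say with eigenvalue `c`. The span hypothesis says that every coordinate of `f'_1` in the basis
`f` is nonzero, and comparing coordinates in `Aᵀ f'_1 = c f'_1` forces `a_j = c` for all `j`.
Hence `A = c • 1`, and the vanishing of the sum of its entries, `d c = 0`, gives `c = 0`.
-/

open Matrix

namespace Module.Basis

variable {ι K V : Type*} [Field K] [AddCommGroup V] [Module K V] (b : Basis ι K V)
  {T S : Module.End K V} {μ : ι → K}

theorem repr_apply_eq_mul_of_apply_eq_smul (hT : ∀ i, T (b i) = μ i • b i) (v : V) (i : ι) :
    b.repr (T v) i = μ i * b.repr v i := by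
  have hcoord : b.coord i ∘ₗ T = μ i • b.coord i := b.ext fun j => by
    rcases eq_or_ne j i with rfl | hji <;> simp [*]
  simpa using LinearMap.congr_fun hcoord v

theorem eq_repr_smul_of_apply_eq_smul (hμ : Function.Injective μ)
    (hT : ∀ i, T (b i) = μ i • b i) {v : V} {j : ι} (hv : T v = μ j • v) :
    v = b.repr v j • b j := by
  refine b.ext_elem fun k => ?_
  rcases eq_or_ne k j with rfl | hkj
  · simp
  have hk := b.repr_apply_eq_mul_of_apply_eq_smul hT v k
  rw [hv, map_smul, Finsupp.smul_apply, smul_eq_mul] at hk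
  have hμkj : μ j ≠ μ k := hμ.ne hkj.symm
  simpa [Finsupp.single_apply, hkj.symm, hμkj] using hk

theorem apply_eq_repr_smul_of_commute (hμ : Function.Injective μ)
    (hT : ∀ i, T (b i) = μ i • b i) (hST : Commute S T) (j : ι) :
    S (b j) = b.repr (S (b j)) j • b j :=
  b.eq_repr_smul_of_apply_eq_smul hμ hT <| by
    rw [← Module.End.mul_apply, ← hST.eq, Module.End.mul_apply, hT, map_smul]

theorem eq_of_apply_eq_smul_of_repr_ne_zero {a : ι → K} (hS : ∀ i, S (b i) = a i • b i)
    {v : V} {c : K} (hv : S v = c • v) (hsupp : ∀ i, b.repr v i ≠ 0) (i : ι) : a i = c := by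
  have hi := b.repr_apply_eq_mul_of_apply_eq_smul hS v i
  rw [hv, map_smul, Finsupp.smul_apply, smul_eq_mul] at hi
  exact mul_right_cancel₀ (hsupp i) hi.symm

theorem exists_eq_smul_one_of_commute (b' : Basis ι K V) {T' : Module.End K V} {μ' : ι → K}
    (hμ : Function.Injective μ) (hμ' : Function.Injective μ')
    (hT : ∀ i, T (b i) = μ i • b i) (hT' : ∀ i, T' (b' i) = μ' i • b' i)
    (hST : Commute S T) (hST' : Commute S T') {j : ι} (hsupp : ∀ i, b.repr (b' j) i ≠ 0) :
    ∃ c : K, S = c • 1 := by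
  have hdiag := b.apply_eq_repr_smul_of_commute hμ hT hST
  have hc := b.eq_of_apply_eq_smul_of_repr_ne_zero hdiag
    (b'.apply_eq_repr_smul_of_commute hμ' hT' hST' j) hsupp
  exact ⟨_, b.ext fun i => by rw [hdiag i, hc i]; rfl⟩

end Module.Basis

theorem exists_basis_coe_eq_of_hasEigenvector {ι K V : Type*} [Fintype ι] [Nonempty ι] [Field K]
    [AddCommGroup V] [Module K V] {T : Module.End K V} {μ : ι → K} {f : ι → V}
    (hμ : Function.Injective μ) (hf : ∀ i, T.HasEigenvector (μ i) (f i))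
    (hcard : Fintype.card ι = Module.finrank K V) :
    ∃ b : Module.Basis ι K V, ⇑b = f :=
  ⟨_, coe_basisOfLinearIndependentOfCardEqFinrank
    (Module.End.eigenvectors_linearIndependent' T μ hμ f hf) hcard⟩

theorem Matrix.hasEigenvector_toLinAlgEquiv' {ι K : Type*} [Fintype ι] [DecidableEq ι] [Field K]
    {M : Matrix ι ι K} {μ : K} {v : ι → K} (hv : M *ᵥ v = μ • v) (hv0 : v ≠ 0) :
    Module.End.HasEigenvector (toLinAlgEquiv' M) μ v :=
  ⟨Module.End.mem_eigenspace_iff.2 (by rwa [toLinAlgEquiv'_apply]), hv0⟩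

theorem Commute.matrix_transpose {n R : Type*} [Fintype n] [CommSemiring R]
    {A B : Matrix n n R} (h : Commute A B) : Commute Aᵀ Bᵀ := by
  rw [Commute, SemiconjBy, ← transpose_mul, ← transpose_mul, h.eq]

/-- Let `M`, `M'` be `d × d` real matrices such that `Mᵀ` (resp. `M'ᵀ`)
has `d` distinct real eigenvalues with eigenvectors `f_1, …, f_d` (resp. `f'_1, …, f'_d`),
and suppose no `f'_j` lies in the span of a proper subset of `{f_1, …, f_d}`.  Then every
matrix `A` with `M A = A M`, `M' A = A M'` and `∑_{x,x'} A x x' = 0` is zero. -/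
theorem stmt13 {ι : Type*} [Fintype ι] [DecidableEq ι]
    (M M' : Matrix ι ι ℝ) (μ μ' : ι → ℝ) (f f' : ι → ι → ℝ)
    (hμ : Function.Injective μ) (hμ' : Function.Injective μ')
    (hf : ∀ j, f j ≠ 0) (hf' : ∀ j, f' j ≠ 0)
    (heig : ∀ j, Mᵀ *ᵥ f j = μ j • f j)
    (heig' : ∀ j, M'ᵀ *ᵥ f' j = μ' j • f' j)
    (hspan : ∀ (j : ι) (s : Set ι), s ≠ Set.univ →
      f' j ∉ Submodule.span ℝ (f '' s))
    (A : Matrix ι ι ℝ)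
    (hAM : M * A = A * M)
    (hAM' : M' * A = A * M')
    (htr : ∑ x, ∑ x', A x x' = 0) :
    A = 0 := by
  rcases isEmpty_or_nonempty ι with _ | hι
  · exact Subsingleton.elim _ _
  obtain ⟨j₀⟩ := id hι
  have hcard : Fintype.card ι = Module.finrank ℝ (ι → ℝ) :=
    (Module.finrank_fintype_fun_eq_card ℝ).symm
  obtain ⟨b, rfl⟩ := exists_basis_coe_eq_of_hasEigenvector hμ
    (fun j => hasEigenvector_toLinAlgEquiv' (heig j) (hf j)) hcard
  obtain ⟨b', rfl⟩ := exists_basis_coe_eq_of_hasEigenvector hμ'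
    (fun j => hasEigenvector_toLinAlgEquiv' (heig' j) (hf' j)) hcard
  have hsupp : ∀ i, b.repr (b' j₀) i ≠ 0 := fun i hi =>
    hspan j₀ {i}ᶜ (fun h => by simpa using congrArg (i ∈ ·) h)
      (b.mem_span_image.2 fun k hk => by rintro rfl; exact Finsupp.mem_support_iff.1 hk hi)
  obtain ⟨c, hc⟩ := b.exists_eq_smul_one_of_commute b' (T := toLinAlgEquiv' Mᵀ)
    (T' := toLinAlgEquiv' M'ᵀ) hμ hμ' (fun i => by simpa using heig i)
    (fun i => by simpa using heig' i) ((Commute.matrix_transpose hAM).symm.map toLinAlgEquiv')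
    ((Commute.matrix_transpose hAM').symm.map toLinAlgEquiv') hsupp
  have hAt : Aᵀ = c • 1 := toLinAlgEquiv'.injective (by rw [hc, map_smul, map_one])
  have hA : A = c • 1 := by rw [← transpose_transpose A, hAt, transpose_smul, transpose_one]
  have hc0 : (Fintype.card ι : ℝ) * c = 0 := by
    simpa [hA, one_apply, Finset.sum_ite_eq] using htr
  simp [hA, (mul_eq_zero.1 hc0).resolve_left (by simp)]
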